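/- arXiv:2108.02000 — 6 statements merged into one kernel-verified Lean document; each statement's English description precedes it below -/
import Mathlib

section
/- Let W be a type of possible worlds and let ∼ be a binary relation on W that is symmetric and transitive (a partial equivalence relation). For a predicate φ : W → Prop define (K φ) w := ∀ w', w' ∼ w → φ w'. Fix predicates σ_G, σ_E : W → Prop and abbreviate e := λ w, ¬ σ_G w ∨ σ_E w and d := λ w, ¬ σ_E w. Then for every w ∈ W: (K (λ w'. σ_E w' → (K e) w')) w holds if and only if (K e) w ∨ (K d) w holds. -/
/-- Epistemic operator: `K r φ w` means φ holds in every world accessible from `w`. -/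
def K {W : Type*} (r : W → W → Prop) (φ : W → Prop) (w : W) : Prop :=
  ∀ w', r w' w → φ w'

/-- For a partial equivalence relation `r` (symmetric and transitive, not assumed
reflexive), with `e := fun w => ¬ σG w ∨ σE w` and `d := fun w => ¬ σE w`,
we have `K (σE → K e)` iff `K e ∨ K d`. -/
theorem stmt_0 {W : Type*} (r : W → W → Prop)
    (hsymm : Symmetric r) (htrans : Transitive r)
    (σG σE : W → Prop) (w : W) :
    K r (fun w' => σE w' → K r (fun v => ¬ σG v ∨ σE v) w') w
      ↔ (K r (fun v => ¬ σG v ∨ σE v) w ∨ K r (fun v => ¬ σE v) w) := by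
  constructor
  · intro H
    by_cases h : ∃ v, r v w ∧ σE v
    · obtain ⟨v, hvw, hv⟩ := h
      left
      intro u huw
      exact H v hvw hv u (htrans huw (hsymm hvw))
    · right
      intro u huw hu
      exact h ⟨u, huw, hu⟩
  · rintro (H | H) u huw _ v hvu
    · exact H v (htrans hvu huw)
    · exact absurd ‹σE u› (H u huw)
end

section
/- Let W be a type of possible worlds and N a finite index set of agents with at least two elements. For each i ∈ N let ∼_i be a binary relation on W that is symmetric and transitive (a partial equivalence relation). For a predicate φ : W → Prop define (K_i φ) w := ∀ w', w' ∼_i w → φ w'. Fix predicates σ_G, σ_E : W → Prop and abbreviate e := λ w, ¬ σ_G w ∨ σ_E w and d := λ w, ¬ σ_E w. Then for every w ∈ W: [∃ i j ∈ N, (K_i (λ w'. σ_E w' → (K_j e) w')) w] holds if and only if [∃ i j ∈ N with i ≠ j, ((K_i e) w ∨ (K_i d) w ∨ (K_i (λ w'. σ_E w' → (K_j e) w')) w)] holds. -/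
/-- With a finite index set `ι` of agents having at least two elements, each agent's
accessibility relation a partial equivalence relation (symmetric and transitive),
`e := fun w => ¬ σG w ∨ σE w` and `d := fun w => ¬ σE w`:
`∃ i j, K_i (σE → K_j e)` iff `∃ i ≠ j, (K_i e ∨ K_i d ∨ K_i (σE → K_j e))`. -/
theorem stmt_1 {W ι : Type*} [Finite ι] [Nontrivial ι]
    (r : ι → W → W → Prop)
    (hsymm : ∀ i, Symmetric (r i)) (htrans : ∀ i, Transitive (r i))
    (σG σE : W → Prop) (w : W) :
    (∃ i j : ι, K (r i) (fun w' => σE w' → K (r j) (fun v => ¬ σG v ∨ σE v) w') w)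
      ↔ (∃ i j : ι, i ≠ j ∧
          (K (r i) (fun v => ¬ σG v ∨ σE v) w
            ∨ K (r i) (fun v => ¬ σE v) w
            ∨ K (r i) (fun w' => σE w' → K (r j) (fun v => ¬ σG v ∨ σE v) w') w)) := by
  constructor
  · rintro ⟨i, j, h⟩
    by_cases hij : i = j
    · subst hij
      obtain ⟨k, hk⟩ := exists_ne i
      refine ⟨i, k, (Ne.symm hk), ?_⟩
      by_cases hE : ∃ w1, r i w1 w ∧ σE w1
      · obtain ⟨w1, hw1, hσ⟩ := hE
        left
        intro v hv
        exact h w1 hw1 hσ v (htrans i hv (hsymm i hw1))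
      · right; left
        intro v hv hσ
        exact hE ⟨v, hv, hσ⟩
    · exact ⟨i, j, hij, Or.inr (Or.inr h)⟩
  · rintro ⟨i, j, hij, h | h | h⟩
    · refine ⟨i, i, fun w' hw' _ v hv => h v (htrans i hv hw')⟩
    · exact ⟨i, j, fun w' hw' hσ => absurd hσ (h w' hw')⟩
    · exact ⟨i, j, h⟩
end

section
/- Let W be a type of possible worlds and N a finite index set of agents with at least two elements. For each i ∈ N let ∼_i be a binary relation on W that is symmetric and transitive (a partial equivalence relation). For a predicate φ : W → Prop define (K_i φ) w := ∀ w', w' ∼_i w → φ w'. Fix predicates σ_G, σ_E : W → Prop and abbreviate e := λ w, ¬ σ_G w ∨ σ_E w and d := λ w, ¬ σ_E w. Then for every w ∈ W: [e w ∨ ∃ i j ∈ N, (K_i (λ w'. σ_E w' → (K_j e) w')) w] holds if and only if [∃ i j ∈ N with i ≠ j, ((K_i e) w ∨ (K_i d) w ∨ (K_i (λ w'. σ_E w' → (K_j e) w')) w ∨ e w)] holds. -/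
/-- With a finite index set `ι` of agents having at least two elements, each agent's
accessibility relation a partial equivalence relation (symmetric and transitive),
`e := fun w => ¬ σG w ∨ σE w` and `d := fun w => ¬ σE w`:
`e w ∨ ∃ i j, K_i (σE → K_j e)` iff
`∃ i ≠ j, (K_i e ∨ K_i d ∨ K_i (σE → K_j e) ∨ e w)`. -/
theorem stmt_2 {W ι : Type*} [Finite ι] [Nontrivial ι]
    (r : ι → W → W → Prop)
    (hsymm : ∀ i, Symmetric (r i)) (htrans : ∀ i, Transitive (r i))
    (σG σE : W → Prop) (w : W) :
    ((¬ σG w ∨ σE w) ∨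
        ∃ i j : ι, K (r i) (fun w' => σE w' → K (r j) (fun v => ¬ σG v ∨ σE v) w') w)
      ↔ (∃ i j : ι, i ≠ j ∧
          (K (r i) (fun v => ¬ σG v ∨ σE v) w
            ∨ K (r i) (fun v => ¬ σE v) w
            ∨ K (r i) (fun w' => σE w' → K (r j) (fun v => ¬ σG v ∨ σE v) w') w
            ∨ (¬ σG w ∨ σE w))) := by
  obtain ⟨a, b, hab⟩ := exists_pair_ne ι
  constructor
  · rintro (he | ⟨i, j, hK⟩)
    · exact ⟨a, b, hab, Or.inr (Or.inr (Or.inr he))⟩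
    · by_cases hij : i = j
      · subst hij
        obtain ⟨j', hj'⟩ := exists_ne i
        by_cases hE : ∃ w'', r i w'' w ∧ σE w''
        · obtain ⟨w'', hw'', hsE⟩ := hE
          refine ⟨i, j', (Ne.symm hj'), Or.inl ?_⟩
          intro v hv
          exact hK w'' hw'' hsE v (htrans i hv (hsymm i hw''))
        · push_neg at hE
          exact ⟨i, j', Ne.symm hj', Or.inr (Or.inl fun w' hw' => hE w' hw')⟩
      · exact ⟨i, j, hij, Or.inr (Or.inr (Or.inl hK))⟩
  · rintro ⟨i, j, hij, (h | h | h | h)⟩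
    · exact Or.inr ⟨i, i, fun w' hw' _ v hv => h v (htrans i hv hw')⟩
    · exact Or.inr ⟨i, j, fun w' hw' hsE => absurd hsE (h w' hw')⟩
    · exact Or.inr ⟨i, j, h⟩
    · exact Or.inl h
end

section
/- For every σ ∈ Σ and s ∈ L(E), let D(σ,s) denote the condition: there exist i, j ∈ Nσ such that K_i (λ s'. ē_σ(s') → K_j e_σ at s') holds at s. Then the conjunction of [for all σ ∈ Σc and all s ∈ L(E), D(σ,s) ∨ e_σ(s)] and [L(E) is controllable] is equivalent to [for all σ ∈ Σ and all s ∈ L(E), D(σ,s) ∨ e_σ(s)]. -/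
/-- Natural projection: keep only the observable letters. -/
def proj {A : Type*} (obs : A → Bool) (s : List A) : List A := s.filter obs

/-- Knowledge of supervisor `i` (with observable events `obs`) at a legal word `s`:
`φ` holds at every legal word that looks to the supervisor like `s`. -/
def Kat {A : Type*} (LE : Set (List A)) (obs : A → Bool)
    (φ : List A → Prop) (s : List A) : Prop :=
  ∀ s' ∈ LE, proj obs s' = proj obs s → φ s'

/-- `e_σ(s)`: σ can be enabled after `s` without violating the control requirement. -/
def eP {A : Type*} (LG LE : Set (List A)) (σ : A) (s : List A) : Prop :=
  s ++ [σ] ∈ LG → s ++ [σ] ∈ LE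

/-- `ē_σ(s)`: σ must be enabled after `s`. -/
def ebP {A : Type*} (LE : Set (List A)) (σ : A) (s : List A) : Prop :=
  s ++ [σ] ∈ LE

/-- `D(σ, s)`: some supervisor `i` controlling σ knows that whenever σ must be
enabled, some supervisor `j` controlling σ knows that σ can be enabled. -/
def D {A : Type*} {n : ℕ} (LG LE : Set (List A)) (Sio Sic : Fin n → A → Bool)
    (σ : A) (s : List A) : Prop :=
  ∃ i j : Fin n, Sic i σ ∧ Sic j σ ∧
    Kat LE (Sio i) (fun s' => ebP LE σ s' → Kat LE (Sio j) (eP LG LE σ) s') s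

/-- Separating controllability: inference-observability quantified over controllable
events only, together with controllability of `L(E)`, is equivalent to
inference-observability quantified over all events. -/
theorem stmt_5 {A : Type*} [Finite A] {n : ℕ}
    (Sio Sic : Fin n → A → Bool)
    (LG LE : Set (List A))
    (hGpc : ∀ (s : List A) (σ : A), s ++ [σ] ∈ LG → s ∈ LG)
    (hEpc : ∀ (s : List A) (σ : A), s ++ [σ] ∈ LE → s ∈ LE)
    (hsub : LE ⊆ LG) (hnil : [] ∈ LE) :
    ((∀ σ : A, (∃ i : Fin n, Sic i σ) → ∀ s ∈ LE,
        D LG LE Sio Sic σ s ∨ eP LG LE σ s)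
      ∧ (∀ s ∈ LE, ∀ σ : A, (¬ ∃ i : Fin n, Sic i σ) →
          s ++ [σ] ∈ LG → s ++ [σ] ∈ LE))
    ↔ (∀ σ : A, ∀ s ∈ LE, D LG LE Sio Sic σ s ∨ eP LG LE σ s) := by
  constructor
  · rintro ⟨h1, h2⟩ σ s hs
    by_cases hc : ∃ i : Fin n, Sic i σ
    · exact h1 σ hc s hs
    · exact Or.inr (fun hg => h2 s hs σ hc hg)
  · intro h
    refine ⟨fun σ _ s hs => h σ s hs, fun s hs σ hc hg => ?_⟩
    rcases h σ s hs with hD | hE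
    · obtain ⟨i, j, hi, _, _⟩ := hD
      exact absurd ⟨i, hi⟩ hc
    · exact hE hg
end

section
/- If L(E) is inference-observable in the corrected sense, then L(E) is inference-observable in the extended sense; indeed, the extended condition is witnessed by choosing the default predicate φ_σ = e_σ for every σ ∈ Σc. -/
/-- `d_σ(s)`: σ can be disabled after `s`. -/
def dP {A : Type*} (LE : Set (List A)) (σ : A) (s : List A) : Prop :=
  s ++ [σ] ∉ LE

/-- `d̄_σ(s)`: σ must be disabled after `s`. -/
def dbP {A : Type*} (LG LE : Set (List A)) (σ : A) (s : List A) : Prop :=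
  s ++ [σ] ∈ LG ∧ s ++ [σ] ∉ LE

/-- The five-way disjunction of the extended inference-observability condition,
for a given choice of default predicate `φ`. -/
def ExtDisj {A : Type*} {n : ℕ} (Sio Sic : Fin n → A → Bool)
    (LG LE : Set (List A)) (σ : A) (φ : List A → Prop) (s : List A) : Prop :=
  (∃ i : Fin n, Sic i σ ∧ Kat LE (Sio i) (eP LG LE σ) s)
  ∨ (∃ i : Fin n, Sic i σ ∧ Kat LE (Sio i) (dP LE σ) s)
  ∨ (∃ i : Fin n, Sic i σ ∧ Kat LE (Sio i)
      (fun s' => ebP LE σ s' →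
        ∃ j : Fin n, Sic j σ ∧ j ≠ i ∧ Kat LE (Sio j) (eP LG LE σ) s') s)
  ∨ (∃ i : Fin n, Sic i σ ∧ Kat LE (Sio i)
      (fun s' => dbP LG LE σ s' →
        ∃ j : Fin n, Sic j σ ∧ j ≠ i ∧ Kat LE (Sio j) (dP LE σ) s') s)
  ∨ φ s

/-- `L(E)` is inference-observable in the extended sense. -/
def InfObsExt {A : Type*} {n : ℕ} (Sio Sic : Fin n → A → Bool)
    (LG LE : Set (List A)) : Prop :=
  ∀ σ : A, (∃ i : Fin n, Sic i σ) →
    ∃ φ : List A → Prop, (φ = eP LG LE σ ∨ φ = dP LE σ) ∧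
      ∀ s ∈ LE, ExtDisj Sio Sic LG LE σ φ s

/-- `L(E)` is inference-observable in the corrected sense. -/
def InfObsCorrected {A : Type*} {n : ℕ} (Sio Sic : Fin n → A → Bool)
    (LG LE : Set (List A)) : Prop :=
  ∀ σ : A, (∃ i : Fin n, Sic i σ) → ∀ s ∈ LE,
    (∃ i j : Fin n, Sic i σ ∧ Sic j σ ∧
      Kat LE (Sio i) (fun s' => ebP LE σ s' → Kat LE (Sio j) (eP LG LE σ) s') s)
    ∨ eP LG LE σ s

/-- If `L(E)` is inference-observable in the corrected sense, then it is
inference-observable in the extended sense; indeed, the extended condition is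
witnessed by choosing the default predicate `φ_σ = e_σ` for every controllable σ. -/
theorem stmt_8 {A : Type*} [Finite A] {n : ℕ}
    (Sio Sic : Fin n → A → Bool)
    (LG LE : Set (List A))
    (hGpc : ∀ (s : List A) (σ : A), s ++ [σ] ∈ LG → s ∈ LG)
    (hEpc : ∀ (s : List A) (σ : A), s ++ [σ] ∈ LE → s ∈ LE)
    (hsub : LE ⊆ LG) (hnil : [] ∈ LE)
    (h : InfObsCorrected Sio Sic LG LE) :
    InfObsExt Sio Sic LG LE
    ∧ (∀ σ : A, (∃ i : Fin n, Sic i σ) →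
        ∀ s ∈ LE, ExtDisj Sio Sic LG LE σ (eP LG LE σ) s) := by
  have key : ∀ σ : A, (∃ i : Fin n, Sic i σ) →
      ∀ s ∈ LE, ExtDisj Sio Sic LG LE σ (eP LG LE σ) s := by
    intro σ hσ s hs
    rcases h σ hσ s hs with ⟨i, j, hi, hj, hK⟩ | he
    · by_cases hij : i = j
      · subst hij
        by_cases hex : ∃ s' ∈ LE, proj (Sio i) s' = proj (Sio i) s ∧ ebP LE σ s'
        · rcases hex with ⟨s', hs', hps', heb⟩
          left
          refine ⟨i, hi, ?_⟩
          intro t ht hpt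
          exact hK s' hs' hps' heb t ht (by rw [hpt, hps'])
        · right; left
          refine ⟨i, hi, ?_⟩
          intro s' hs' hp hmem
          exact hex ⟨s', hs', hp, hmem⟩
      · right; right; left
        refine ⟨i, hi, ?_⟩
        intro s' hs' hp heb
        exact ⟨j, hj, fun hji => hij hji.symm, hK s' hs' hp heb⟩
    · right; right; right; right; exact he
  exact ⟨fun σ hσ => ⟨eP LG LE σ, Or.inl rfl, key σ hσ⟩, key⟩
end

section
/- In the setting of the observer construction: for every word s ∈ L(G) and every i ∈ {1,…,n}, the state reached by the product automaton G' on s has the form (δ*(q₀,s), X₁, …, X_n) where, for each i, X_i equals the state estimate {δ*(q₀, s') : s' ∈ L(G), P_i(s') = P_i(s)}; in particular δ*(q₀, s) ∈ X_i for every i. -/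
/-- Iterated (partial) transition function of a DFA with partial transitions. -/
def deltaStar {Q A : Type*} (δ : Q → A → Option Q) : Q → List A → Option Q
  | q, [] => some q
  | q, a :: s =>
    match δ q a with
    | none => none
    | some q' => deltaStar δ q' s

/-- Set of states reachable from `X` via words all of whose letters are
unobservable (outside `obs`). -/
def ureach {Q A : Type*} (δ : Q → A → Option Q) (obs : A → Bool)
    (X : Set Q) : Set Q :=
  {q : Q | ∃ q0 ∈ X, ∃ s : List A, (∀ a ∈ s, obs a = false) ∧
    deltaStar δ q0 s = some q}

open Classical in
/-- Partial transition function of the observer automaton: an unobservable event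
leaves the estimate unchanged; an observable event maps the estimate to the
unobservable reach of its σ-successors, defined iff that set is nonempty. -/
noncomputable def obsStep {Q A : Type*} (δ : Q → A → Option Q) (obs : A → Bool)
    (X : Set Q) (σ : A) : Option (Set Q) :=
  if obs σ = false then some X
  else
    let Y := ureach δ obs {q' : Q | ∃ q ∈ X, δ q σ = some q'}
    if Y.Nonempty then some Y else none

open Classical in
/-- Partial transition function of the synchronous product of the plant with the
`n` observers: defined iff every component transition is defined. -/
noncomputable def prodStep {Q A : Type*} {n : ℕ} (δ : Q → A → Option Q)
    (oio : Fin n → A → Bool) (p : Q × (Fin n → Set Q)) (σ : A) :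
    Option (Q × (Fin n → Set Q)) :=
  if h : (δ p.1 σ).isSome ∧ ∀ i, (obsStep δ (oio i) (p.2 i) σ).isSome then
    some ((δ p.1 σ).get h.1, fun i => (obsStep δ (oio i) (p.2 i) σ).get (h.2 i))
  else none

lemma deltaStar_append {Q A : Type*} (δ : Q → A → Option Q) (q : Q) (s t : List A) :
    deltaStar δ q (s ++ t) = (deltaStar δ q s).bind fun q' => deltaStar δ q' t := by
  induction s generalizing q with
  | nil => simp [deltaStar]
  | cons a s ih =>
    cases h : δ q a <;> simp [deltaStar, h, ih]

lemma filter_eq_append_singleton {A : Type*} (p : A → Bool) (l : List A) :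
    ∀ (m : List A) (a : A), l.filter p = m ++ [a] →
    ∃ l1 u, l = l1 ++ a :: u ∧ l1.filter p = m ∧ (∀ b ∈ u, p b = false) := by
  induction l using List.reverseRecOn with
  | nil => intro m a h; simp at h
  | append_singleton l b ih =>
    intro m a h
    rw [List.filter_append] at h
    by_cases hb : p b
    · simp [hb] at h
      obtain ⟨h1, h2⟩ : List.filter p l = m ∧ [b] = [a] := by simpa using h
      simp at h2
      exact ⟨l, [], by simp [h2], h1, by simp⟩
    · simp at hb
      simp [hb] at h
      obtain ⟨l1, u, rfl, hf, hu⟩ := ih m a h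
      refine ⟨l1, u ++ [b], by simp, hf, ?_⟩
      intro c hc
      rcases List.mem_append.1 hc with h' | h'
      · exact hu c h'
      · simp at h'; subst h'; exact hb

lemma obsStep_unobs {Q A : Type*} (δ : Q → A → Option Q) (obs : A → Bool)
    (X : Set Q) {σ : A} (h : obs σ = false) : obsStep δ obs X σ = some X := by
  simp [obsStep, h]

lemma obsStep_obs {Q A : Type*} (δ : Q → A → Option Q) (obs : A → Bool)
    (X : Set Q) {σ : A} (h : obs σ = true)
    (hne : (ureach δ obs {q' : Q | ∃ q ∈ X, δ q σ = some q'}).Nonempty) :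
    obsStep δ obs X σ =
      some (ureach δ obs {q' : Q | ∃ q ∈ X, δ q σ = some q'}) := by
  simp [obsStep, h, hne]

lemma prodStep_eq {Q A : Type*} {n : ℕ} (δ : Q → A → Option Q)
    (oio : Fin n → A → Bool) (p : Q × (Fin n → Set Q)) (σ : A)
    (q' : Q) (X' : Fin n → Set Q)
    (h1 : δ p.1 σ = some q')
    (h2 : ∀ i, obsStep δ (oio i) (p.2 i) σ = some (X' i)) :
    prodStep δ oio p σ = some (q', X') := by
  have hc : (δ p.1 σ).isSome ∧ ∀ i, (obsStep δ (oio i) (p.2 i) σ).isSome :=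
    ⟨by simp [h1], fun i => by simp [h2 i]⟩
  rw [prodStep, dif_pos hc]
  refine congrArg some (Prod.ext ?_ ?_)
  · simp [h1]
  · funext i
    simp [h2 i]

/-- On every plant word `s ∈ L(G)`, the product automaton reaches the state
`(δ*(q₀,s), X₁, …, X_n)` where each `X_i` is exactly supervisor `i`'s state
estimate `{δ*(q₀,s') : s' ∈ L(G), P_i(s') = P_i(s)}`; in particular the true
plant state belongs to every estimate. -/
theorem stmt_13 {Q A : Type*} [Finite A] {n : ℕ}
    (δ : Q → A → Option Q) (q₀ : Q) (oio : Fin n → A → Bool) :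
    ∀ (s : List A) (q : Q), deltaStar δ q₀ s = some q →
      ∃ p : Q × (Fin n → Set Q),
        deltaStar (prodStep δ oio) (q₀, fun i => ureach δ (oio i) {q₀}) s = some p
        ∧ p.1 = q
        ∧ (∀ i : Fin n, p.2 i =
            {q' : Q | ∃ s' : List A, deltaStar δ q₀ s' = some q'
              ∧ s'.filter (oio i) = s.filter (oio i)})
        ∧ (∀ i : Fin n, q ∈ p.2 i) := by
  -- estimates
  set E : List A → Fin n → Set Q := fun s i =>
    {q' : Q | ∃ s' : List A, deltaStar δ q₀ s' = some q'
      ∧ s'.filter (oio i) = s.filter (oio i)} with hE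
  intro s
  induction s using List.reverseRecOn with
  | nil =>
    intro q hq
    simp [deltaStar] at hq
    subst hq
    refine ⟨(q₀, fun i => ureach δ (oio i) {q₀}), rfl, rfl, ?_, ?_⟩
    · intro i
      ext q'
      constructor
      · rintro ⟨q1, hq1, u, hu, hd⟩
        simp at hq1; subst hq1
        exact ⟨u, hd, by simpa [List.filter_eq_nil_iff] using hu⟩
      · rintro ⟨s', hd, hf⟩
        simp at hf
        exact ⟨q₀, rfl, s', by simpa [List.filter_eq_nil_iff] using hf, hd⟩
    · intro i
      exact ⟨q₀, rfl, [], by simp, rfl⟩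
  | append_singleton s a ih =>
    intro q hq
    rw [deltaStar_append] at hq
    cases hs : deltaStar δ q₀ s with
    | none => rw [hs] at hq; simp at hq
    | some q1 =>
      rw [hs] at hq
      simp [deltaStar] at hq
      cases hstep : δ q1 a with
      | none => simp [deltaStar, hstep] at hq
      | some q2 =>
        simp [deltaStar, hstep] at hq
        subst hq
        obtain ⟨p, hp, hp1, hp2, hmem⟩ := ih q1 hs
        -- new estimate for each supervisor
        have hnew : ∀ i, obsStep δ (oio i) (p.2 i) a = some (E (s ++ [a]) i) := by
          intro i
          by_cases ha : oio i a = false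
          · rw [obsStep_unobs δ (oio i) _ ha, hp2 i]
            refine congrArg some ?_
            simp only [hE]
            ext q'
            simp only [Set.mem_setOf_eq, List.filter_append]
            simp [ha]
          · have ha' : oio i a = true := by simpa using ha
            have hset : ureach δ (oio i) {q' : Q | ∃ qq ∈ p.2 i, δ qq a = some q'}
                = E (s ++ [a]) i := by
              ext q'
              constructor
              · rintro ⟨q3, hq3, u, hu, hd⟩
                obtain ⟨q4, hq4, hδ4⟩ := hq3
                rw [hp2 i] at hq4
                obtain ⟨s1, hd1, hf1⟩ := hq4
                refine ⟨s1 ++ a :: u, ?_, ?_⟩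
                · rw [show s1 ++ a :: u = (s1 ++ [a]) ++ u by simp,
                    deltaStar_append, deltaStar_append, hd1]
                  simp [deltaStar, hδ4, hd]
                · rw [List.filter_append, List.filter_append, hf1]
                  simp [ha', List.filter_eq_nil_iff.2 (by simpa using hu)]
              · rintro ⟨s', hd, hf⟩
                rw [List.filter_append] at hf
                simp [ha'] at hf
                obtain ⟨l1, u, rfl, hf1, hu⟩ :=
                  filter_eq_append_singleton (oio i) s' _ a hf
                rw [show l1 ++ a :: u = (l1 ++ [a]) ++ u by simp,
                  deltaStar_append, deltaStar_append] at hd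
                cases hd1 : deltaStar δ q₀ l1 with
                | none => rw [hd1] at hd; simp at hd
                | some q3 =>
                  rw [hd1] at hd
                  simp [deltaStar] at hd
                  cases hδ3 : δ q3 a with
                  | none => simp [deltaStar, hδ3] at hd
                  | some q4 =>
                    simp [deltaStar, hδ3] at hd
                    refine ⟨q4, ⟨q3, ?_, hδ3⟩, u, hu, hd⟩
                    rw [hp2 i]
                    exact ⟨l1, hd1, hf1⟩
            have hmem' : q2 ∈ ureach δ (oio i)
                {q' : Q | ∃ qq ∈ p.2 i, δ qq a = some q'} :=
              ⟨q2, ⟨q1, hmem i, hstep⟩, [], by simp, rfl⟩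
            rw [obsStep_obs δ (oio i) _ ha' ⟨q2, hmem'⟩]
            exact congrArg some hset
        have hprod : prodStep δ oio p a = some (q2, E (s ++ [a])) :=
          prodStep_eq δ oio p a q2 (E (s ++ [a])) (by rw [hp1]; exact hstep) hnew
        refine ⟨(q2, E (s ++ [a])), ?_, rfl, fun i => rfl, ?_⟩
        · rw [deltaStar_append, hp]
          simp [deltaStar, hprod]
        · intro i
          exact ⟨s ++ [a], by
            rw [deltaStar_append, hs]; simp [deltaStar, hstep], rfl⟩
end
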